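/- arXiv:1006.2891 — 3 statements merged into one kernel-verified Lean document; each statement's English description precedes it below -/
import Mathlib

section
/- Suppose y : I → ℝ is twice differentiable with y > 0 and satisfies y'' + (1/y)(y')² + y y' + 1/2 = 0 on an open interval I, and suppose t = φ(x) is a differentiable function on I with φ'(x) = y(x). Then the function u defined by u(t) = y(φ⁻¹(t))³ satisfies u'' + u' + 3/2 = 0, where φ is assumed to be a bijection onto its image with differentiable inverse. -/
/-!
The chain rule through the inverse ψ of φ gives dx/dt = 1/y, so u' = 3 y² y' · (1/y) = 3 y y'
and u'' = (3 y'² + 3 y y'') / y. Hence u'' + u' + 3/2 is three times the left-hand side of the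
equation for y, which vanishes. Because u' is only known on φ '' I, differentiating it once more
needs φ '' I to be a neighbourhood of each of its points; this holds since φ' = y > 0 makes φ
strictly increasing, so by the intermediate value theorem it maps small intervals onto intervals.
-/

open Set Filter Topology

theorem HasDerivAt.of_eventually_leftInverse {𝕜 : Type*} [NontriviallyNormedField 𝕜]
    {φ ψ : 𝕜 → 𝕜} {x a : 𝕜} (hφ : HasDerivAt φ a x) (hψ : DifferentiableAt 𝕜 ψ (φ x))
    (hinv : ∀ᶠ z in 𝓝 x, ψ (φ z) = z) : HasDerivAt ψ a⁻¹ (φ x) := by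
  have hid : HasDerivAt (ψ ∘ φ) 1 x := (hasDerivAt_id x).congr_of_eventuallyEq hinv
  have h : _root_.deriv ψ (φ x) * a = 1 := (hψ.hasDerivAt.comp x hφ).unique hid
  exact eq_inv_of_mul_eq_one_left h ▸ hψ.hasDerivAt

theorem image_mem_nhds_of_hasDerivAt_pos {I : Set ℝ} (hI : IsOpen I) {φ φ' : ℝ → ℝ}
    (hφ : ∀ x ∈ I, HasDerivAt φ (φ' x) x) (hpos : ∀ x ∈ I, 0 < φ' x) {x : ℝ} (hx : x ∈ I) :
    φ '' I ∈ 𝓝 (φ x) := by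
  obtain ⟨ε, hε, hball⟩ := Metric.isOpen_iff.mp hI x hx
  have hsub : Icc (x - ε / 2) (x + ε / 2) ⊆ I := by
    rw [← Real.closedBall_eq_Icc]
    exact (Metric.closedBall_subset_ball (by linarith)).trans hball
  have hcont : ContinuousOn φ (Icc (x - ε / 2) (x + ε / 2)) := fun z hz =>
    (hφ z (hsub hz)).continuousAt.continuousWithinAt
  have hmono : StrictMonoOn φ (Icc (x - ε / 2) (x + ε / 2)) :=
    strictMonoOn_of_deriv_pos (convex_Icc _ _) hcont fun z hz => by
      rw [(hφ z (hsub (interior_subset hz))).deriv]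
      exact hpos z (hsub (interior_subset hz))
  have himage := hcont.image_Ioo_of_strictMonoOn (by linarith) hmono
  have hxmem : φ x ∈ Ioo (φ (x - ε / 2)) (φ (x + ε / 2)) :=
    himage ▸ mem_image_of_mem φ ⟨by linarith, by linarith⟩
  exact mem_of_superset (isOpen_Ioo.mem_nhds hxmem)
    (himage ▸ image_mono (Ioo_subset_Icc_self.trans hsub))

/-- The generalized Sundman transformation u = y³, dt = y dx maps solutions of
y'' + (1/y)(y')² + y y' + 1/2 = 0 to solutions of u'' + u' + 3/2 = 0. -/
theorem stmt_2 (I : Set ℝ) (hI : IsOpen I) (y φ ψ : ℝ → ℝ)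
    (hpos : ∀ x ∈ I, 0 < y x)
    (hy1 : ∀ x ∈ I, DifferentiableAt ℝ y x)
    (hy2 : ∀ x ∈ I, DifferentiableAt ℝ (deriv y) x)
    (hode : ∀ x ∈ I,
      deriv (deriv y) x + (1 / y x) * (deriv y x) ^ 2 + y x * deriv y x + 1/2 = 0)
    (hφ : ∀ x ∈ I, HasDerivAt φ (y x) x)
    (hinv : ∀ x ∈ I, ψ (φ x) = x)
    (hψ : ∀ t ∈ φ '' I, DifferentiableAt ℝ ψ t) :
    ∀ t ∈ φ '' I,
      deriv (deriv (fun s : ℝ => (y (ψ s)) ^ 3)) t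
        + deriv (fun s : ℝ => (y (ψ s)) ^ 3) t + 3/2 = 0 := by
  have hcomp : ∀ g : ℝ → ℝ, ∀ x ∈ I, DifferentiableAt ℝ g x →
      HasDerivAt (fun s => g (ψ s)) (deriv g x * (y x)⁻¹) (φ x) := fun g x hx hg => by
    have hψ' : HasDerivAt ψ (y x)⁻¹ (φ x) :=
      (hφ x hx).of_eventually_leftInverse (hψ _ (mem_image_of_mem φ hx))
        (eventually_of_mem (hI.mem_nhds hx) hinv)
    have hg' : HasDerivAt g (deriv g x) (ψ (φ x)) := by rw [hinv x hx]; exact hg.hasDerivAt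
    exact hg'.comp (φ x) hψ'
  have hu' : ∀ x ∈ I, deriv (fun s => y (ψ s) ^ 3) (φ x) = 3 * y x * deriv y x := by
    intro x hx
    rw [((hcomp y x hx (hy1 x hx)).fun_pow 3).deriv, hinv x hx]
    field_simp [(hpos x hx).ne']
    ring
  rintro t ⟨x, hx, rfl⟩
  have hu'_eq : deriv (fun s => y (ψ s) ^ 3) =ᶠ[𝓝 (φ x)]
      fun s => 3 * y (ψ s) * deriv y (ψ s) := by
    filter_upwards [image_mem_nhds_of_hasDerivAt_pos hI hφ hpos hx]
    rintro _ ⟨x', hx', rfl⟩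
    rw [hu' x' hx', hinv x' hx']
  have hu'' := ((hcomp y x hx (hy1 x hx)).const_mul 3).fun_mul (hcomp _ x hx (hy2 x hx))
  rw [hu'_eq.deriv_eq, hu''.deriv, hu' x hx, hinv x hx]
  have hy : y x * (y x)⁻¹ = 1 := mul_inv_cancel₀ (hpos x hx).ne'
  linear_combination 3 * hode x hx + 3 * deriv (deriv y) x * hy
end

section
/- Suppose y : I → ℝ is twice differentiable and satisfies y'' + x(y')² + y y' + e^(−2xy) = 0 on an open interval I, and φ : I → ℝ satisfies φ'(x) = e^(−x·y(x)) with φ a bijection onto its image with differentiable inverse ψ. Then u(t) = y(ψ(t)) satisfies u''(t) + 1 = 0. -/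
/-!
Since `φ' = e^(-xy) > 0`, `φ` is a local diffeomorphism with inverse `ψ`, and `ψ'(φ x) = e^(xy)`,
i.e. `d/dt = e^(xy) d/dx`. Hence `u' = e^(xy) y'` and
`u'' = e^(xy) (e^(xy) y')' = e^(2xy) (y'' + x y'² + y y') = -e^(2xy) e^(-2xy) = -1`.
-/

open Set Filter Topology Real

theorem isOpen_image_of_hasDerivAt_pos {I : Set ℝ} (hI : IsOpen I) {f f' : ℝ → ℝ}
    (hf : ∀ x ∈ I, HasDerivAt f (f' x) x) (hf' : ∀ x ∈ I, 0 < f' x) : IsOpen (f '' I) := by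
  rw [isOpen_iff_mem_nhds]
  rintro _ ⟨x, hx, rfl⟩
  obtain ⟨ε, hε, hsub⟩ := (nhds_basis_Icc_pos x).mem_iff.1 (hI.mem_nhds hx)
  have hcont : ContinuousOn f (Icc (x - ε) (x + ε)) := fun z hz =>
    (hf z (hsub hz)).continuousAt.continuousWithinAt
  have hmono : StrictMonoOn f (Icc (x - ε) (x + ε)) :=
    strictMonoOn_of_hasDerivWithinAt_pos (convex_Icc _ _) hcont
      (fun z hz => (hf z (hsub (interior_subset hz))).hasDerivWithinAt)
      (fun z hz => hf' z (hsub (interior_subset hz)))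
  have hleft : x - ε ∈ Icc (x - ε) (x + ε) := ⟨le_rfl, by linarith⟩
  have hright : x + ε ∈ Icc (x - ε) (x + ε) := ⟨by linarith, le_rfl⟩
  have hcenter : x ∈ Icc (x - ε) (x + ε) := ⟨by linarith, by linarith⟩
  refine mem_of_superset (Ioo_mem_nhds ?_ ?_) ((intermediate_value_Ioo (by linarith) hcont).trans
    (image_mono (Ioo_subset_Icc_self.trans hsub)))
  · exact hmono hleft hcenter (by linarith)
  · exact hmono hcenter hright (by linarith)

section Reparametrization

variable {I : Set ℝ} {φ ψ w : ℝ → ℝ}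

theorem hasDerivAt_comp_of_leftInvOn (hI : IsOpen I) (hφ : ∀ x ∈ I, HasDerivAt φ (w x) x)
    (hw : ∀ x ∈ I, 0 < w x) (hinv : LeftInvOn ψ φ I) (hψ : ∀ t ∈ φ '' I, ContinuousAt ψ t)
    {f : ℝ → ℝ} {f' x : ℝ} (hx : x ∈ I) (hf : HasDerivAt f f' x) :
    HasDerivAt (fun t => f (ψ t)) (f' / w x) (φ x) := by
  have hright : ∀ᶠ t in 𝓝 (φ x), φ (ψ t) = t := by
    filter_upwards [(isOpen_image_of_hasDerivAt_pos hI hφ hw).mem_nhds (mem_image_of_mem φ hx)]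
      with _ ⟨z, hz, hzt⟩
    rw [← hzt, hinv hz]
  have hφx : HasDerivAt φ (w x) (ψ (φ x)) := by rw [hinv hx]; exact hφ x hx
  have hψ' : HasDerivAt ψ (w x)⁻¹ (φ x) :=
    hφx.of_local_left_inverse (hψ _ (mem_image_of_mem φ hx)) (hw x hx).ne' hright
  rw [← hinv hx] at hf
  exact div_eq_mul_inv f' (w x) ▸ hf.comp (φ x) hψ'

theorem deriv_deriv_comp_of_leftInvOn (hI : IsOpen I) (hφ : ∀ x ∈ I, HasDerivAt φ (w x) x)
    (hw : ∀ x ∈ I, 0 < w x) (hinv : LeftInvOn ψ φ I) (hψ : ∀ t ∈ φ '' I, ContinuousAt ψ t)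
    {f : ℝ → ℝ} (hf : ∀ x ∈ I, DifferentiableAt ℝ f x) {g' x : ℝ} (hx : x ∈ I)
    (hg : HasDerivAt (fun z => deriv f z / w z) g' x) :
    deriv (deriv fun t => f (ψ t)) (φ x) = g' / w x := by
  have hu' : deriv (fun t => f (ψ t)) =ᶠ[𝓝 (φ x)] fun t => deriv f (ψ t) / w (ψ t) := by
    filter_upwards [(isOpen_image_of_hasDerivAt_pos hI hφ hw).mem_nhds (mem_image_of_mem φ hx)]
      with _ ⟨z, hz, hzt⟩
    subst hzt
    rw [hinv hz, (hasDerivAt_comp_of_leftInvOn hI hφ hw hinv hψ hz (hf z hz).hasDerivAt).deriv]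
  rw [hu'.deriv_eq, (hasDerivAt_comp_of_leftInvOn hI hφ hw hinv hψ hx hg).deriv]

end Reparametrization

/-- The generalized Sundman transformation u = y, dt = e^(−xy) dx maps solutions of
y'' + x(y')² + y y' + e^(−2xy) = 0 to solutions of u'' + 1 = 0. -/
theorem stmt_3 (I : Set ℝ) (hI : IsOpen I) (y φ ψ : ℝ → ℝ)
    (hy1 : ∀ x ∈ I, DifferentiableAt ℝ y x)
    (hy2 : ∀ x ∈ I, DifferentiableAt ℝ (deriv y) x)
    (hode : ∀ x ∈ I,
      deriv (deriv y) x + x * (deriv y x) ^ 2 + y x * deriv y x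
        + Real.exp (-2 * x * y x) = 0)
    (hφ : ∀ x ∈ I, HasDerivAt φ (Real.exp (-(x * y x))) x)
    (hinv : ∀ x ∈ I, ψ (φ x) = x)
    (hψ : ∀ t ∈ φ '' I, DifferentiableAt ℝ ψ t) :
    ∀ t ∈ φ '' I,
      deriv (deriv (fun s : ℝ => y (ψ s))) t + 1 = 0 := by
  rintro _ ⟨x, hx, rfl⟩
  have hw : HasDerivAt (fun z => exp (-(z * y z)))
      (exp (-(x * y x)) * -(y x + x * deriv y x)) x :=
    (((hasDerivAt_id' x).fun_mul (hy1 x hx).hasDerivAt).fun_neg.exp).congr_deriv (by ring)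
  rw [deriv_deriv_comp_of_leftInvOn hI hφ (fun _ _ => exp_pos _) hinv
    (fun t ht => (hψ t ht).continuousAt) hy1 hx ((hy2 x hx).hasDerivAt.div hw (exp_pos _).ne')]
  have hsq : exp (-2 * x * y x) = exp (-(x * y x)) ^ 2 := by rw [sq, ← exp_add]; ring_nf
  have hode_x := hode x hx
  rw [hsq] at hode_x
  field_simp
  linear_combination hode_x
end

section
/- Under the hypotheses of the first prolongation formula, additionally assuming y twice differentiable and u twice differentiable, for all x ∈ I: u''(φ(x))·G(x,y(x))² + u'(φ(x))·(G_x(x,y(x)) + G_y(x,y(x))·y'(x)) = F_y·y''(x) + 2F_{xy}·y'(x) + F_{yy}·y'(x)² + F_{xx}, where all partials of F, G are evaluated at (x, y(x)). -/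
/-- Partial derivative in the first variable. -/
noncomputable def pdx (f : ℝ → ℝ → ℝ) : ℝ → ℝ → ℝ :=
  fun x y => deriv (fun x' => f x' y) x

/-- Partial derivative in the second variable. -/
noncomputable def pdy (f : ℝ → ℝ → ℝ) : ℝ → ℝ → ℝ :=
  fun x y => deriv (fun y' => f x y') y

lemma pdx_eq (F : ℝ → ℝ → ℝ) (hF : ContDiff ℝ (⊤ : ℕ∞) (fun p : ℝ × ℝ => F p.1 p.2)) (x y : ℝ) :
    pdx F x y = fderiv ℝ (fun p : ℝ × ℝ => F p.1 p.2) (x, y) (1, 0) := by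
  have h := ((hF.differentiable (by simp) (x, y)).hasFDerivAt).comp_hasDerivAt x
    ((hasDerivAt_id x).prodMk (hasDerivAt_const x y))
  exact h.deriv

lemma pdy_eq (F : ℝ → ℝ → ℝ) (hF : ContDiff ℝ (⊤ : ℕ∞) (fun p : ℝ × ℝ => F p.1 p.2)) (x y : ℝ) :
    pdy F x y = fderiv ℝ (fun p : ℝ × ℝ => F p.1 p.2) (x, y) (0, 1) := by
  have h := ((hF.differentiable (by simp) (x, y)).hasFDerivAt).comp_hasDerivAt y
    ((hasDerivAt_const y x).prodMk (hasDerivAt_id y))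
  exact h.deriv

lemma chain_rule (F : ℝ → ℝ → ℝ) (hF : ContDiff ℝ (⊤ : ℕ∞) (fun p : ℝ × ℝ => F p.1 p.2))
    {y : ℝ → ℝ} {x : ℝ} (hy : DifferentiableAt ℝ y x) :
    HasDerivAt (fun x' => F x' (y x'))
      (pdx F x (y x) + pdy F x (y x) * deriv y x) x := by
  have h := ((hF.differentiable (by simp) (x, y x)).hasFDerivAt).comp_hasDerivAt x
    ((hasDerivAt_id x).prodMk hy.hasDerivAt)
  refine h.congr_deriv ?_
  symm
  have h1 : ((1 : ℝ), deriv y x) = ((1 : ℝ), (0 : ℝ)) + deriv y x • ((0 : ℝ), (1 : ℝ)) := by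
    simp
  rw [pdx_eq F hF, pdy_eq F hF, h1, map_add, map_smul]
  simp [mul_comm]

lemma contDiff_pdx (F : ℝ → ℝ → ℝ) (hF : ContDiff ℝ (⊤ : ℕ∞) (fun p : ℝ × ℝ => F p.1 p.2)) :
    ContDiff ℝ (⊤ : ℕ∞) (fun p : ℝ × ℝ => pdx F p.1 p.2) := by
  have hg : ContDiff ℝ (⊤ : ℕ∞) (fderiv ℝ (fun p : ℝ × ℝ => F p.1 p.2)) := hF.fderiv_right (by simp)
  have h : (fun p : ℝ × ℝ => pdx F p.1 p.2)
      = fun p => fderiv ℝ (fun q : ℝ × ℝ => F q.1 q.2) p ((1 : ℝ), (0 : ℝ)) := by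
    funext p; exact pdx_eq F hF p.1 p.2
  rw [h]
  exact hg.clm_apply contDiff_const

lemma contDiff_pdy (F : ℝ → ℝ → ℝ) (hF : ContDiff ℝ (⊤ : ℕ∞) (fun p : ℝ × ℝ => F p.1 p.2)) :
    ContDiff ℝ (⊤ : ℕ∞) (fun p : ℝ × ℝ => pdy F p.1 p.2) := by
  have hg : ContDiff ℝ (⊤ : ℕ∞) (fderiv ℝ (fun p : ℝ × ℝ => F p.1 p.2)) := hF.fderiv_right (by simp)
  have h : (fun p : ℝ × ℝ => pdy F p.1 p.2)
      = fun p => fderiv ℝ (fun q : ℝ × ℝ => F q.1 q.2) p ((0 : ℝ), (1 : ℝ)) := by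
    funext p; exact pdy_eq F hF p.1 p.2
  rw [h]
  exact hg.clm_apply contDiff_const

lemma clairaut (F : ℝ → ℝ → ℝ) (hF : ContDiff ℝ (⊤ : ℕ∞) (fun p : ℝ × ℝ => F p.1 p.2)) (x y : ℝ) :
    pdx (pdy F) x y = pdy (pdx F) x y := by
  set f := fun p : ℝ × ℝ => F p.1 p.2 with hf
  have hg : ContDiff ℝ (⊤ : ℕ∞) (fderiv ℝ f) := hF.fderiv_right (by simp)
  -- pdx (pdy F) x y = D² f (x,y) (1,0) (0,1)
  have h1 : HasDerivAt (fun x' => fderiv ℝ f (x', y))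
      (fderiv ℝ (fderiv ℝ f) (x, y) ((1 : ℝ), (0 : ℝ))) x :=
    ((hg.differentiable (by simp) (x, y)).hasFDerivAt).comp_hasDerivAt x
      ((hasDerivAt_id x).prodMk (hasDerivAt_const x y))
  have h1' : HasDerivAt (fun x' => fderiv ℝ f (x', y) ((0 : ℝ), (1 : ℝ)))
      (fderiv ℝ (fderiv ℝ f) (x, y) ((1 : ℝ), (0 : ℝ)) ((0 : ℝ), (1 : ℝ))) x := by
    simpa using h1.clm_apply (hasDerivAt_const x ((0 : ℝ), (1 : ℝ)))
  have e1 : pdx (pdy F) x y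
      = fderiv ℝ (fderiv ℝ f) (x, y) ((1 : ℝ), (0 : ℝ)) ((0 : ℝ), (1 : ℝ)) := by
    have : (fun x' => pdy F x' y) = fun x' => fderiv ℝ f (x', y) ((0 : ℝ), (1 : ℝ)) := by
      funext x'; exact pdy_eq F hF x' y
    rw [pdx, this]
    exact h1'.deriv
  -- pdy (pdx F) x y = D² f (x,y) (0,1) (1,0)
  have h2 : HasDerivAt (fun y' => fderiv ℝ f (x, y'))
      (fderiv ℝ (fderiv ℝ f) (x, y) ((0 : ℝ), (1 : ℝ))) y :=
    ((hg.differentiable (by simp) (x, y)).hasFDerivAt).comp_hasDerivAt y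
      ((hasDerivAt_const y x).prodMk (hasDerivAt_id y))
  have h2' : HasDerivAt (fun y' => fderiv ℝ f (x, y') ((1 : ℝ), (0 : ℝ)))
      (fderiv ℝ (fderiv ℝ f) (x, y) ((0 : ℝ), (1 : ℝ)) ((1 : ℝ), (0 : ℝ))) y := by
    simpa using h2.clm_apply (hasDerivAt_const y ((1 : ℝ), (0 : ℝ)))
  have e2 : pdy (pdx F) x y
      = fderiv ℝ (fderiv ℝ f) (x, y) ((0 : ℝ), (1 : ℝ)) ((1 : ℝ), (0 : ℝ)) := by
    have : (fun y' => pdx F x y') = fun y' => fderiv ℝ f (x, y') ((1 : ℝ), (0 : ℝ)) := by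
      funext y'; exact pdx_eq F hF x y'
    rw [pdy, this]
    exact h2'.deriv
  rw [e1, e2]
  exact second_derivative_symmetric
    (fun p => (hF.differentiable (by simp) p).hasFDerivAt)
    ((hg.differentiable (by simp) (x, y)).hasFDerivAt) _ _

/-- Second prolongation formula for the generalized Sundman transformation
u = F(x,y), dt = G(x,y)dx:
u''·G² + u'·(G_x + G_y y') = F_y y'' + 2F_{xy} y' + F_{yy} (y')² + F_{xx}. -/
theorem stmt_16 (I : Set ℝ) (hI : IsOpen I) (u y φ : ℝ → ℝ) (F G : ℝ → ℝ → ℝ)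
    (hF : ContDiff ℝ (⊤ : ℕ∞) (fun p : ℝ × ℝ => F p.1 p.2))
    (hG : ContDiff ℝ (⊤ : ℕ∞) (fun p : ℝ × ℝ => G p.1 p.2))
    (hGne : ∀ x y : ℝ, G x y ≠ 0)
    (hy1 : ∀ x ∈ I, DifferentiableAt ℝ y x)
    (hy2 : ∀ x ∈ I, DifferentiableAt ℝ (deriv y) x)
    (hu1 : Differentiable ℝ u)
    (hu2 : Differentiable ℝ (deriv u))
    (hφ : ∀ x ∈ I, HasDerivAt φ (G x (y x)) x)
    (huF : ∀ x ∈ I, u (φ x) = F x (y x)) :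
    ∀ x ∈ I,
      deriv (deriv u) (φ x) * (G x (y x)) ^ 2
        + deriv u (φ x) * (pdx G x (y x) + pdy G x (y x) * deriv y x)
      = pdy F x (y x) * deriv (deriv y) x + 2 * pdy (pdx F) x (y x) * deriv y x
        + pdy (pdy F) x (y x) * (deriv y x) ^ 2 + pdx (pdx F) x (y x) := by
  -- First prolongation formula on I
  have step1 : ∀ x ∈ I, deriv u (φ x) * G x (y x)
      = pdx F x (y x) + pdy F x (y x) * deriv y x := by
    intro x hx
    have hcomp : HasDerivAt (fun x' => u (φ x')) (deriv u (φ x) * G x (y x)) x :=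
      ((hu1 (φ x)).hasDerivAt).comp x (hφ x hx)
    have hrhs : HasDerivAt (fun x' => F x' (y x'))
        (pdx F x (y x) + pdy F x (y x) * deriv y x) x := chain_rule F hF (hy1 x hx)
    have hev : (fun x' => F x' (y x')) =ᶠ[nhds x] fun x' => u (φ x') :=
      (Filter.eventuallyEq_of_mem (hI.mem_nhds hx) huF).symm
    exact (hcomp.congr_of_eventuallyEq hev).unique hrhs
  intro x hx
  -- Differentiate both sides of step1 at x
  have hA : HasDerivAt (fun x' => deriv u (φ x') * G x' (y x'))
      ((deriv (deriv u) (φ x) * G x (y x)) * G x (y x)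
        + deriv u (φ x) * (pdx G x (y x) + pdy G x (y x) * deriv y x)) x := by
    have h1 : HasDerivAt (fun x' => deriv u (φ x')) (deriv (deriv u) (φ x) * G x (y x)) x :=
      ((hu2 (φ x)).hasDerivAt).comp x (hφ x hx)
    exact h1.mul (chain_rule G hG (hy1 x hx))
  have hB : HasDerivAt (fun x' => pdx F x' (y x') + pdy F x' (y x') * deriv y x')
      ((pdx (pdx F) x (y x) + pdy (pdx F) x (y x) * deriv y x)
        + ((pdx (pdy F) x (y x) + pdy (pdy F) x (y x) * deriv y x) * deriv y x
            + pdy F x (y x) * deriv (deriv y) x)) x := by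
    have h1 := chain_rule (pdx F) (contDiff_pdx F hF) (hy1 x hx)
    have h2 := chain_rule (pdy F) (contDiff_pdy F hF) (hy1 x hx)
    exact h1.add (h2.mul (hy2 x hx).hasDerivAt)
  have hev : (fun x' => pdx F x' (y x') + pdy F x' (y x') * deriv y x')
      =ᶠ[nhds x] fun x' => deriv u (φ x') * G x' (y x') :=
    (Filter.eventuallyEq_of_mem (hI.mem_nhds hx) step1).symm
  have hab := (hA.congr_of_eventuallyEq hev).unique hB
  rw [clairaut F hF] at hab
  linear_combination hab
end
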